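/- arXiv:1604.05090 — 2 statements merged into one kernel-verified Lean document; each statement's English description precedes it below -/
import Mathlib

section
/- Let P be a comparison matrix for N = 2^n players, σ a draw, i* a player, and {k,l} a pair of distinct players. For t ∈ [0,1] let P[kl←t] denote the comparison matrix agreeing with P everywhere except that P_kl = t and P_lk = 1 − t. Then the function t ↦ wp(i*, P[kl←t], σ) on [0,1] is affine: there exist real constants α, β with wp(i*, P[kl←t], σ) = α·t + β for all t ∈ [0,1]. -/
/-- A perfect (balanced) binary tree of depth `n` with leaves labelled by `α`. -/
inductive BT (α : Type) : ℕ → Type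
  | leaf : α → BT α 0
  | node {n : ℕ} : BT α n → BT α n → BT α (n + 1)

namespace BT

/-- The list of leaf labels, from left to right. -/
def leaves {α : Type} : ∀ {n : ℕ}, BT α n → List α
  | _, .leaf a => [a]
  | _, .node L R => L.leaves ++ R.leaves

/-- Relabel the leaves of a tree. -/
def map {α β : Type} (f : α → β) : ∀ {n : ℕ}, BT α n → BT β n
  | _, .leaf a => .leaf (f a)
  | _, .node L R => .node (L.map f) (R.map f)

end BT

/-- Two trees represent the same draw iff one can be obtained from the other by
swapping the two children subtrees at internal nodes. -/
def BTequiv {α : Type} : ∀ {n : ℕ}, BT α n → BT α n → Prop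
  | 0, .leaf a, .leaf b => a = b
  | _ + 1, .node L R, .node L' R' =>
      (BTequiv L L' ∧ BTequiv R R') ∨ (BTequiv L R' ∧ BTequiv R L')

/-- A draw: each of the `N` players occurs exactly once among the leaves. -/
def IsDraw {N n : ℕ} (t : BT (Fin N) n) : Prop :=
  ∀ i : Fin N, t.leaves.count i = 1

/-- The winning distribution of a knockout tournament: `wd P t i` is the probability
that player `i` wins the (sub)tournament with draw `t` and comparison matrix `P`. -/
noncomputable def wd {N : ℕ} (P : Fin N → Fin N → ℝ) :
    ∀ {n : ℕ}, BT (Fin N) n → Fin N → ℝ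
  | _, .leaf j => fun i => if i = j then 1 else 0
  | _, .node L R => fun i =>
      wd P L i * (∑ j, wd P R j * P i j) + wd P R i * (∑ j, wd P L j * P i j)

/-- `P` is a comparison matrix. -/
def IsCompMatrix {N : ℕ} (P : Fin N → Fin N → ℝ) : Prop :=
  ∀ i j : Fin N, i ≠ j → 0 ≤ P i j ∧ P i j ≤ 1 ∧ P i j + P j i = 1

/-- `P` is deterministic: every off-diagonal entry is 0 or 1. -/
def IsDet {N : ℕ} (P : Fin N → Fin N → ℝ) : Prop :=
  ∀ i j : Fin N, i ≠ j → P i j = 0 ∨ P i j = 1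

/-- The set `𝒫(P,ε)` of ε-perturbations of `P`. -/
def perturbs {N : ℕ} (P : Fin N → Fin N → ℝ) (ε : ℝ) : Set (Fin N → Fin N → ℝ) :=
  {P' | IsCompMatrix P' ∧ ∀ i j : Fin N, i ≠ j → |P' i j - P i j| ≤ ε}

/-- The ε-guaranteed winning probability `wp_ε(i,P,σ)`. -/
noncomputable def wpe {N n : ℕ} (i : Fin N) (P : Fin N → Fin N → ℝ) (ε : ℝ)
    (t : BT (Fin N) n) : ℝ :=
  sInf ((fun P' => wd P' t i) '' perturbs P ε)

/-- The comparison matrix of the hard `n`-round tournament `H_n` (players 0-indexed):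
for `i < j`, player `i` beats player `j` iff `i = j - 2 ^ v` where `2 ^ v` is the largest
power of 2 dividing `j` (in 0-indexed numbering). -/
noncomputable def hardP (n : ℕ) : Fin (2 ^ n) → Fin (2 ^ n) → ℝ := fun i j =>
  if i = j then 0
  else if (i : ℕ) < (j : ℕ) then
    (if (i : ℕ) + 2 ^ padicValNat 2 (j : ℕ) = (j : ℕ) then 1 else 0)
  else
    (if (j : ℕ) + 2 ^ padicValNat 2 (i : ℕ) = (i : ℕ) then 0 else 1)

/-- The tree of depth `n` whose leaves are `s, s+1, …, s + 2^n - 1` from left to right. -/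
def ordTree : (n : ℕ) → ℕ → BT ℕ n
  | 0, s => .leaf s
  | n + 1, s => .node (ordTree n s) (ordTree n (s + 2 ^ n))

/-- The identity draw, placing players `0, 1, …, 2^n - 1` on the leaves in order. -/
def idDraw (n : ℕ) : BT (Fin (2 ^ n)) n :=
  (ordTree n 0).map (fun k => ⟨k % 2 ^ n, Nat.mod_lt _ (by positivity)⟩)

/-- `f_p(x,y) = p(x+y) + (1-2p)xy`. -/
def fp (p x y : ℝ) : ℝ := p * (x + y) + (1 - 2 * p) * x * y

/-- `B_p` on trees with real leaf labels. -/
noncomputable def Bp (p : ℝ) : ∀ {n : ℕ}, BT ℝ n → ℝ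
  | _, .leaf x => x
  | _, .node L R => fp p (Bp p L) (Bp p R)

/-- Group a list into consecutive pairs. -/
def pairList {α : Type} : List α → List (α × α)
  | a :: b :: rest => (a, b) :: pairList rest
  | _ => []

/-- The first-round matches of a draw: the consecutive sibling pairs of leaves. -/
def firstPairs {α : Type} {n : ℕ} (t : BT α n) : List (α × α) := pairList t.leaves

/-- A draw is mixed (w.r.t. the set `B` of big players) if every first-round match
pairs a big player with a small player. -/
def MixedDraw {N n : ℕ} (B : Finset (Fin N)) (t : BT (Fin N) n) : Prop :=
  ∀ q ∈ firstPairs t, ((q.1 ∈ B) ↔ q.2 ∉ B)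

/-- Number of leaves labelled `1`. -/
noncomputable def ones {n : ℕ} (t : BT ℝ n) : ℕ := t.leaves.count 1

/-- All leaf labels are `0` or `1`. -/
def ZeroOne {n : ℕ} (t : BT ℝ n) : Prop := ∀ x ∈ t.leaves, x = 0 ∨ x = 1

/-- `P[kl←t]`: the matrix agreeing with `P` except `P k l = t` and `P l k = 1 - t`. -/
def updPair {N : ℕ} (P : Fin N → Fin N → ℝ) (k l : Fin N) (t : ℝ) :
    Fin N → Fin N → ℝ :=
  fun i j => if i = k ∧ j = l then t else if i = l ∧ j = k then 1 - t else P i j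

/-- Perturb a deterministic matrix: for each pair `(w, l) ∈ S` (winner first),
set `P w l = 1 - ε` and `P l w = ε`; other entries unchanged. -/
def detPerturb {N : ℕ} (P : Fin N → Fin N → ℝ) (S : Finset (Fin N × Fin N)) (ε : ℝ) :
    Fin N → Fin N → ℝ :=
  fun i j => if (i, j) ∈ S then 1 - ε else if (j, i) ∈ S then ε else P i j

/-- Swap the result of the single match between `a` and `b`. -/
def swapPair {N : ℕ} (P : Fin N → Fin N → ℝ) (a b : Fin N) : Fin N → Fin N → ℝ :=
  fun i j => if i = a ∧ j = b then P b a else if i = b ∧ j = a then P a b else P i j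

/-- The pair `(a,b)` (with `a` the winner) is crucial for `i` in `C(P,σ)`. -/
def Crucial {N n : ℕ} (P : Fin N → Fin N → ℝ) (σ : BT (Fin N) n) (i : Fin N)
    (a b : Fin N) : Prop :=
  a ≠ b ∧ P a b = 1 ∧ wd (swapPair P a b) σ i = 0

lemma wd_eq_zero {N : ℕ} (P : Fin N → Fin N → ℝ) :
    ∀ {n : ℕ} (τ : BT (Fin N) n) (i : Fin N), i ∉ τ.leaves → wd P τ i = 0
  | _, .leaf j, i, h => by
    simp only [BT.leaves, List.mem_singleton] at h
    simp [wd, h]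
  | _, .node L R, i, h => by
    simp only [BT.leaves, List.mem_append] at h
    push_neg at h
    simp [wd, wd_eq_zero P L i h.1, wd_eq_zero P R i h.2]

lemma wd_congr {N : ℕ} (P Q : Fin N → Fin N → ℝ) :
    ∀ {n : ℕ} (τ : BT (Fin N) n),
      (∀ i j, i ∈ τ.leaves → j ∈ τ.leaves → P i j = Q i j) → ∀ i, wd P τ i = wd Q τ i
  | _, .leaf j, _, i => by simp [wd]
  | _, .node L R, h, i => by
    have hL : ∀ i j, i ∈ L.leaves → j ∈ L.leaves → P i j = Q i j := fun i j hi hj =>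
      h i j (by simp [BT.leaves, hi]) (by simp [BT.leaves, hj])
    have hR : ∀ i j, i ∈ R.leaves → j ∈ R.leaves → P i j = Q i j := fun i j hi hj =>
      h i j (by simp [BT.leaves, hi]) (by simp [BT.leaves, hj])
    have eL := wd_congr P Q L hL
    have eR := wd_congr P Q R hR
    have t1 : wd P L i * (∑ j, wd P R j * P i j) = wd Q L i * (∑ j, wd Q R j * Q i j) := by
      by_cases hi : i ∈ L.leaves
      · rw [eL]
        congr 1
        refine Finset.sum_congr rfl fun j _ => ?_
        by_cases hj : j ∈ R.leaves
        · rw [eR, h i j (by simp [BT.leaves, hi]) (by simp [BT.leaves, hj])]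
        · rw [wd_eq_zero P R j hj, wd_eq_zero Q R j hj]; ring
      · rw [wd_eq_zero P L i hi, wd_eq_zero Q L i hi]; ring
    have t2 : wd P R i * (∑ j, wd P L j * P i j) = wd Q R i * (∑ j, wd Q L j * Q i j) := by
      by_cases hi : i ∈ R.leaves
      · rw [eR]
        congr 1
        refine Finset.sum_congr rfl fun j _ => ?_
        by_cases hj : j ∈ L.leaves
        · rw [eL, h i j (by simp [BT.leaves, hi]) (by simp [BT.leaves, hj])]
        · rw [wd_eq_zero P L j hj, wd_eq_zero Q L j hj]; ring
      · rw [wd_eq_zero P R i hi, wd_eq_zero Q R i hi]; ring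
    simp only [wd, t1, t2]

lemma updPair_affine {N : ℕ} (P : Fin N → Fin N → ℝ) (k l : Fin N) (t : ℝ) (i j : Fin N) :
    updPair P k l t i j = (1 - t) * updPair P k l 0 i j + t * updPair P k l 1 i j := by
  unfold updPair
  split_ifs <;> ring

lemma wd_node_comm {N n : ℕ} (P : Fin N → Fin N → ℝ) (L R : BT (Fin N) n) (i : Fin N) :
    wd P (BT.node L R) i = wd P (BT.node R L) i := by
  simp only [wd]
  ring

/-- The case where the node is the least common ancestor of k and l (or one of them is
absent from the appropriate side). -/
lemma lca_case {N n : ℕ} (P : Fin N → Fin N → ℝ) (k l : Fin N) (L R : BT (Fin N) n)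
    (hkR : k ∉ R.leaves) (hlL : l ∉ L.leaves) (i : Fin N) (t : ℝ) :
    wd (updPair P k l t) (BT.node L R) i
      = (1 - t) * wd (updPair P k l 0) (BT.node L R) i
        + t * wd (updPair P k l 1) (BT.node L R) i := by
  have hLagree : ∀ s : ℝ, ∀ i j : Fin N, i ∈ L.leaves → j ∈ L.leaves →
      updPair P k l s i j = P i j := by
    intro s i j hi hj
    unfold updPair
    rw [if_neg (fun h : i = k ∧ j = l => hlL (h.2 ▸ hj)), if_neg (fun h : i = l ∧ j = k => hlL (h.1 ▸ hi))]
  have hRagree : ∀ s : ℝ, ∀ i j : Fin N, i ∈ R.leaves → j ∈ R.leaves →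
      updPair P k l s i j = P i j := by
    intro s i j hi hj
    unfold updPair
    rw [if_neg (fun h : i = k ∧ j = l => hkR (h.1 ▸ hi)), if_neg (fun h : i = l ∧ j = k => hkR (h.2 ▸ hj))]
  have eL : ∀ (s : ℝ) (i : Fin N), wd (updPair P k l s) L i = wd P L i :=
    fun s => wd_congr _ _ L (hLagree s)
  have eR : ∀ (s : ℝ) (i : Fin N), wd (updPair P k l s) R i = wd P R i :=
    fun s => wd_congr _ _ R (hRagree s)
  have h1 : (∑ j, wd P R j * updPair P k l t i j)
      = (1 - t) * (∑ j, wd P R j * updPair P k l 0 i j)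
        + t * (∑ j, wd P R j * updPair P k l 1 i j) := by
    rw [Finset.mul_sum, Finset.mul_sum, ← Finset.sum_add_distrib]
    exact Finset.sum_congr rfl fun j _ => by rw [updPair_affine]; ring
  have h2 : (∑ j, wd P L j * updPair P k l t i j)
      = (1 - t) * (∑ j, wd P L j * updPair P k l 0 i j)
        + t * (∑ j, wd P L j * updPair P k l 1 i j) := by
    rw [Finset.mul_sum, Finset.mul_sum, ← Finset.sum_add_distrib]
    exact Finset.sum_congr rfl fun j _ => by rw [updPair_affine]; ring
  simp only [wd, eL, eR]
  rw [h1, h2]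
  ring

/-- The case where both k and l avoid the right subtree. -/
lemma sameSide_case {N n : ℕ} (P : Fin N → Fin N → ℝ) (k l : Fin N) (L R : BT (Fin N) n)
    (hkR : k ∉ R.leaves) (hlR : l ∉ R.leaves)
    (IH : ∀ (i : Fin N) (t : ℝ), wd (updPair P k l t) L i
      = (1 - t) * wd (updPair P k l 0) L i + t * wd (updPair P k l 1) L i)
    (i : Fin N) (t : ℝ) :
    wd (updPair P k l t) (BT.node L R) i
      = (1 - t) * wd (updPair P k l 0) (BT.node L R) i
        + t * wd (updPair P k l 1) (BT.node L R) i := by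
  have hRagree : ∀ s : ℝ, ∀ i j : Fin N, i ∈ R.leaves → j ∈ R.leaves →
      updPair P k l s i j = P i j := by
    intro s i j hi hj
    unfold updPair
    rw [if_neg (fun h : i = k ∧ j = l => hkR (h.1 ▸ hi)), if_neg (fun h : i = l ∧ j = k => hlR (h.1 ▸ hi))]
  have eR : ∀ (s : ℝ) (i : Fin N), wd (updPair P k l s) R i = wd P R i :=
    fun s => wd_congr _ _ R (hRagree s)
  have hS : ∀ (s : ℝ) (i : Fin N),
      (∑ j, wd P R j * updPair P k l s i j) = ∑ j, wd P R j * P i j := by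
    intro s i
    refine Finset.sum_congr rfl fun j _ => ?_
    by_cases hjl : j = l
    · rw [hjl, wd_eq_zero P R l hlR]; ring
    · by_cases hjk : j = k
      · rw [hjk, wd_eq_zero P R k hkR]; ring
      · unfold updPair
        rw [if_neg (fun h : i = k ∧ j = l => hjl h.2), if_neg (fun h : i = l ∧ j = k => hjk h.2)]
  simp only [wd, eR, hS]
  by_cases hi : i = k ∨ i = l
  · have hR0 : wd P R i = 0 := by
      rcases hi with h | h
      · rw [h]; exact wd_eq_zero P R k hkR
      · rw [h]; exact wd_eq_zero P R l hlR
    rw [hR0, IH i t]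
    ring
  · push_neg at hi
    have hPij : ∀ (s : ℝ) (j : Fin N), updPair P k l s i j = P i j := by
      intro s j
      unfold updPair
      rw [if_neg (fun h : i = k ∧ j = l => hi.1 h.1), if_neg (fun h : i = l ∧ j = k => hi.2 h.1)]
    simp only [hPij]
    have h2 : (∑ j, wd (updPair P k l t) L j * P i j)
        = (1 - t) * (∑ j, wd (updPair P k l 0) L j * P i j)
          + t * (∑ j, wd (updPair P k l 1) L j * P i j) := by
      rw [Finset.mul_sum, Finset.mul_sum, ← Finset.sum_add_distrib]
      exact Finset.sum_congr rfl fun j _ => by rw [IH j t]; ring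
    rw [h2, IH i t]
    ring

lemma affine_key {N : ℕ} (P : Fin N → Fin N → ℝ) (k l : Fin N) :
    ∀ {n : ℕ} (τ : BT (Fin N) n), τ.leaves.count k ≤ 1 → τ.leaves.count l ≤ 1 →
      ∀ (i : Fin N) (t : ℝ),
        wd (updPair P k l t) τ i
          = (1 - t) * wd (updPair P k l 0) τ i + t * wd (updPair P k l 1) τ i
  | _, .leaf j, _, _, i, t => by simp only [wd]; ring
  | _, .node L R, hk, hl, i, t => by
    have hk' : L.leaves.count k + R.leaves.count k ≤ 1 := by
      simpa [BT.leaves, List.count_append] using hk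
    have hl' : L.leaves.count l + R.leaves.count l ≤ 1 := by
      simpa [BT.leaves, List.count_append] using hl
    have IHL := affine_key P k l L (le_trans (Nat.le_add_right _ _) hk')
      (le_trans (Nat.le_add_right _ _) hl')
    have IHR := affine_key P k l R (le_trans (Nat.le_add_left _ _) hk')
      (le_trans (Nat.le_add_left _ _) hl')
    have hkex : k ∈ R.leaves → k ∉ L.leaves := by
      intro hR hL
      have h1 : 1 ≤ L.leaves.count k := List.count_pos_iff.mpr hL
      have h2 : 1 ≤ R.leaves.count k := List.count_pos_iff.mpr hR
      omega
    have hlex : l ∈ R.leaves → l ∉ L.leaves := by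
      intro hR hL
      have h1 : 1 ≤ L.leaves.count l := List.count_pos_iff.mpr hL
      have h2 : 1 ≤ R.leaves.count l := List.count_pos_iff.mpr hR
      omega
    by_cases hkR : k ∈ R.leaves <;> by_cases hlR : l ∈ R.leaves
    · -- both in R: mirrored same-side case
      rw [wd_node_comm, wd_node_comm (updPair P k l 0), wd_node_comm (updPair P k l 1)]
      exact sameSide_case P k l R L (hkex hkR) (hlex hlR) IHR i t
    · -- k in R, l not in R: mirrored lca case
      rw [wd_node_comm, wd_node_comm (updPair P k l 0), wd_node_comm (updPair P k l 1)]
      exact lca_case P k l R L (hkex hkR) hlR i t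
    · -- k not in R, l in R: lca case
      exact lca_case P k l L R hkR (hlex hlR) i t
    · -- neither in R: same-side case
      exact sameSide_case P k l L R hkR hlR IHL i t

/-- `t ↦ wp(i*, P[kl←t], σ)` is affine on `[0,1]`. -/
theorem wp_affine_in_entry (n : ℕ)
    (P : Fin (2 ^ n) → Fin (2 ^ n) → ℝ) (hP : IsCompMatrix P)
    (σ : BT (Fin (2 ^ n)) n) (hσ : IsDraw σ)
    (istar k l : Fin (2 ^ n)) (hkl : k ≠ l) :
    ∃ α β : ℝ, ∀ t ∈ Set.Icc (0 : ℝ) 1,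
      wd (updPair P k l t) σ istar = α * t + β := by
  refine ⟨wd (updPair P k l 1) σ istar - wd (updPair P k l 0) σ istar,
    wd (updPair P k l 0) σ istar, fun t _ => ?_⟩
  rw [affine_key P k l σ (le_of_eq (hσ k)) (le_of_eq (hσ l)) istar t]
  ring
end

section
/- Let P be a deterministic comparison matrix for N = 2^n players, σ a draw, and i* a player with wp(i*,P,σ) = 1. Then for every ε ∈ (0,1) there exists a set S of unordered pairs of distinct players such that wp_ε(i*,P,σ) = wp(i*, P_S(ε), σ), where P_S(ε) is obtained from P by changing, for each pair {a,b} ∈ S with winner w and loser l (P_wl = 1), the entries to P_wl = 1 − ε and P_lw = ε, and leaving all other entries unchanged. -/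
/-! The winning probability `wd P σ i` is affine in the result `t` of any single match `(a, b)`
(`P a b = t`, `P b a = 1 - t`): the two subtrees of a node have disjoint players, so of the
factors `wd L i`, `wd R j`, `P i j` in the recursion at most one involves that match. Hence
moving the matches of a perturbation one at a time to an endpoint of their allowed interval
never increases `wd · σ i`. For deterministic `P` the endpoints for a match won by `w` against
`l` are `P w l ∈ {1 - ε, 1}`, so every perturbation is dominated by one of the finitely many
matrices `detPerturb P S ε`, and the infimum is their minimum. -/

open Finset

def affineFunctions : Submodule ℝ (ℝ → ℝ) := Submodule.span ℝ {1, id}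

namespace affineFunctions

lemma const_mem (c : ℝ) : (fun _ => c) ∈ affineFunctions := by
  have h : (fun _ : ℝ => c) = c • (1 : ℝ → ℝ) := by funext; simp
  rw [h]
  exact Submodule.smul_mem _ c (Submodule.subset_span (by simp))

lemma id_mem : (id : ℝ → ℝ) ∈ affineFunctions := Submodule.subset_span (by simp)

lemma mul_const_mem {f : ℝ → ℝ} (hf : f ∈ affineFunctions) (c : ℝ) :
    (fun t => f t * c) ∈ affineFunctions := by
  have h : (fun t => f t * c) = c • f := by funext t; simp [mul_comm]
  rw [h]
  exact Submodule.smul_mem _ c hf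

lemma const_mul_mem {f : ℝ → ℝ} (hf : f ∈ affineFunctions) (c : ℝ) :
    (fun t => c * f t) ∈ affineFunctions := by
  simpa only [mul_comm] using mul_const_mem hf c

lemma sum_mem {ι : Type*} (s : Finset ι) {f : ι → ℝ → ℝ}
    (hf : ∀ j ∈ s, f j ∈ affineFunctions) : (fun t => ∑ j ∈ s, f j t) ∈ affineFunctions := by
  convert Submodule.sum_mem _ hf using 1
  funext t
  simp

lemma min_le_of_mem_Icc {f : ℝ → ℝ} (hf : f ∈ affineFunctions) {lo hi t : ℝ}
    (hlo : lo ≤ t) (hhi : t ≤ hi) : f lo ≤ f t ∨ f hi ≤ f t := by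
  obtain ⟨c, d, rfl⟩ := Submodule.mem_span_pair.mp hf
  simp only [Pi.add_apply, Pi.smul_apply, Pi.one_apply, id, smul_eq_mul]
  rcases le_total 0 d with hd | hd
  · left; nlinarith
  · right; nlinarith

end affineFunctions

section Tournament

variable {N : ℕ}

lemma BT.nodup_node {α : Type} {m : ℕ} {L R : BT α m} (h : (BT.node L R).leaves.Nodup) :
    L.leaves.Nodup ∧ R.leaves.Nodup ∧ L.leaves.Disjoint R.leaves :=
  List.nodup_append'.mp h

lemma wd_eq_zero_of_notMem (P : Fin N → Fin N → ℝ) {n : ℕ} {T : BT (Fin N) n} {i : Fin N}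
    (hi : i ∉ T.leaves) : wd P T i = 0 := by
  induction T with
  | leaf a => simp_all [wd, BT.leaves]
  | node L R ihL ihR =>
    simp only [BT.leaves, List.mem_append, not_or] at hi
    simp [wd, ihL hi.1, ihR hi.2]

lemma sum_wd_mul_congr {P Q : Fin N → Fin N → ℝ} {m : ℕ} {B : BT (Fin N) m} {i : Fin N}
    (hB : ∀ j, wd P B j = wd Q B j) (h : ∀ y ∈ B.leaves, P i y = Q i y) :
    ∑ j, wd P B j * P i j = ∑ j, wd Q B j * Q i j := by
  refine sum_congr rfl fun j _ => ?_
  by_cases hj : j ∈ B.leaves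
  · rw [hB, h j hj]
  · simp [wd_eq_zero_of_notMem _ hj]

lemma wd_mul_sum_congr {P Q : Fin N → Fin N → ℝ} {m : ℕ} {A B : BT (Fin N) m}
    (hA : ∀ j, wd P A j = wd Q A j) (hB : ∀ j, wd P B j = wd Q B j)
    (h : ∀ x ∈ A.leaves, ∀ y ∈ B.leaves, P x y = Q x y) (i : Fin N) :
    wd P A i * ∑ j, wd P B j * P i j = wd Q A i * ∑ j, wd Q B j * Q i j := by
  by_cases hi : i ∈ A.leaves
  · rw [hA, sum_wd_mul_congr hB (h i hi)]
  · simp [wd_eq_zero_of_notMem _ hi]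

lemma wd_congr_s15 {P Q : Fin N → Fin N → ℝ} {n : ℕ} {T : BT (Fin N) n} (hT : T.leaves.Nodup)
    (h : ∀ x ∈ T.leaves, ∀ y ∈ T.leaves, x ≠ y → P x y = Q x y) (i : Fin N) :
    wd P T i = wd Q T i := by
  induction T generalizing i with
  | leaf a => rfl
  | node L R ihL ihR =>
    obtain ⟨hL, hR, hLR⟩ := BT.nodup_node hT
    simp only [BT.leaves, List.mem_append] at h
    have hL' := ihL hL fun x hx y hy => h x (.inl hx) y (.inl hy)
    have hR' := ihR hR fun x hx y hy => h x (.inr hx) y (.inr hy)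
    have hne : ∀ x ∈ L.leaves, ∀ y ∈ R.leaves, x ≠ y := fun x hx y hy hxy => hLR hx (hxy ▸ hy)
    simp only [wd]
    rw [wd_mul_sum_congr hL' hR' (fun x hx y hy => h x (.inl hx) y (.inr hy) (hne x hx y hy)),
      wd_mul_sum_congr hR' hL'
        (fun x hx y hy => h x (.inr hx) y (.inl hy) (hne y hy x hx).symm)]

end Tournament

section updPair

variable {N : ℕ} (Q : Fin N → Fin N → ℝ) (a b : Fin N)

lemma updPair_of_ne {t : ℝ} {i j : Fin N} (h₁ : ¬(i = a ∧ j = b)) (h₂ : ¬(i = b ∧ j = a)) :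
    updPair Q a b t i j = Q i j := by
  simp only [updPair, if_neg h₁, if_neg h₂]

lemma updPair_apply_mem_affineFunctions (i j : Fin N) :
    (fun t => updPair Q a b t i j) ∈ affineFunctions := by
  unfold updPair
  split_ifs
  · exact affineFunctions.id_mem
  · exact Submodule.sub_mem _ (affineFunctions.const_mem 1) affineFunctions.id_mem
  · exact affineFunctions.const_mem _

variable {Q a b}

lemma updPair_self (h : Q a b + Q b a = 1) :
    updPair Q a b (Q a b) = Q := by
  funext i j
  unfold updPair
  split_ifs with h₁ h₂
  · rw [h₁.1, h₁.2]
  · rw [h₂.1, h₂.2]; linarith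
  · rfl

lemma wd_updPair_of_notMem {n : ℕ} {T : BT (Fin N) n} (hT : T.leaves.Nodup)
    (h : a ∉ T.leaves ∨ b ∉ T.leaves) (t : ℝ) (i : Fin N) :
    wd (updPair Q a b t) T i = wd Q T i := by
  refine wd_congr_s15 hT (fun x hx y hy _ => updPair_of_ne Q a b ?_ ?_) i <;>
    rintro ⟨rfl, rfl⟩ <;> tauto

variable {m : ℕ} {L R : BT (Fin N) m}

lemma wd_updPair_mul_mem_affineFunctions (hR : R.leaves.Nodup)
    (ihR : ∀ j, (fun t => wd (updPair Q a b t) R j) ∈ affineFunctions)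
    {i : Fin N} (hi : i ∉ R.leaves) (j : Fin N) :
    (fun t => wd (updPair Q a b t) R j * updPair Q a b t i j) ∈ affineFunctions := by
  by_cases hab : a ∈ R.leaves ∧ b ∈ R.leaves
  · have hQ : ∀ t, updPair Q a b t i j = Q i j := fun t =>
      updPair_of_ne Q a b (fun h => hi (h.1 ▸ hab.1)) (fun h => hi (h.1 ▸ hab.2))
    simpa only [hQ] using affineFunctions.mul_const_mem (ihR j) (Q i j)
  · have hwd := wd_updPair_of_notMem (Q := Q) hR (not_and_or.mp hab)
    simpa only [hwd] using
      affineFunctions.const_mul_mem (updPair_apply_mem_affineFunctions Q a b i j) _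

lemma wd_updPair_mul_sum_mem_affineFunctions (hL : L.leaves.Nodup) (hR : R.leaves.Nodup)
    (hLR : L.leaves.Disjoint R.leaves)
    (ihL : ∀ j, (fun t => wd (updPair Q a b t) L j) ∈ affineFunctions)
    (ihR : ∀ j, (fun t => wd (updPair Q a b t) R j) ∈ affineFunctions) (i : Fin N) :
    (fun t => wd (updPair Q a b t) L i * ∑ j, wd (updPair Q a b t) R j * updPair Q a b t i j)
      ∈ affineFunctions := by
  by_cases hi : i ∈ L.leaves
  swap
  · simpa only [wd_eq_zero_of_notMem _ hi, zero_mul] using affineFunctions.const_mem 0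
  by_cases hab : a ∈ L.leaves ∧ b ∈ L.leaves
  · have hsum : ∀ t, ∑ j, wd (updPair Q a b t) R j * updPair Q a b t i j
        = ∑ j, wd Q R j * Q i j := fun t =>
      sum_wd_mul_congr (wd_updPair_of_notMem hR (.inl fun ha => hLR hab.1 ha) t)
        fun y hy => updPair_of_ne Q a b (fun h => hLR hab.2 (h.2 ▸ hy))
          (fun h => hLR hab.1 (h.2 ▸ hy))
    simpa only [hsum] using affineFunctions.mul_const_mem (ihL i) _
  · have hwd := wd_updPair_of_notMem (Q := Q) hL (not_and_or.mp hab)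
    simpa only [hwd] using affineFunctions.const_mul_mem (affineFunctions.sum_mem _
      fun j _ => wd_updPair_mul_mem_affineFunctions hR ihR (fun h => hLR hi h) j) _

lemma wd_updPair_mem_affineFunctions {n : ℕ} {T : BT (Fin N) n} (hT : T.leaves.Nodup)
    (i : Fin N) : (fun t => wd (updPair Q a b t) T i) ∈ affineFunctions := by
  induction T generalizing i with
  | leaf x => exact affineFunctions.const_mem _
  | node L R ihL ihR =>
    obtain ⟨hL, hR, hLR⟩ := BT.nodup_node hT
    exact Submodule.add_mem _
      (wd_updPair_mul_sum_mem_affineFunctions hL hR hLR (ihL hL) (ihR hR) i)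
      (wd_updPair_mul_sum_mem_affineFunctions hR hL hLR.symm (ihR hR) (ihL hL) i)

end updPair

section Perturbation

variable {N : ℕ} {P Q : Fin N → Fin N → ℝ} {ε : ℝ}

noncomputable def winPairs (P : Fin N → Fin N → ℝ) : Finset (Fin N × Fin N) :=
  univ.filter fun q => q.1 ≠ q.2 ∧ P q.1 q.2 = 1

lemma mem_winPairs {q : Fin N × Fin N} : q ∈ winPairs P ↔ q.1 ≠ q.2 ∧ P q.1 q.2 = 1 := by
  simp [winPairs]

lemma swap_notMem_winPairs (hP : IsCompMatrix P) {q : Fin N × Fin N} (hq : q ∈ winPairs P) :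
    q.swap ∉ winPairs P := by
  rw [mem_winPairs] at hq ⊢
  have hsum := (hP q.1 q.2 hq.1).2.2
  simp only [Prod.fst_swap, Prod.snd_swap]
  intro h
  linarith [h.2, hq.2]

lemma updPair_mem_perturbs (hQ : Q ∈ perturbs P ε) {a b : Fin N} (hab : a ≠ b) {e : ℝ}
    (he₀ : 0 ≤ e) (he₁ : e ≤ 1) (hab_close : |e - P a b| ≤ ε)
    (hba_close : |1 - e - P b a| ≤ ε) : updPair Q a b e ∈ perturbs P ε := by
  refine ⟨fun i j hij => ?_, fun i j hij => ?_⟩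
  · have hQij := hQ.1 i j hij
    unfold updPair
    split_ifs <;> simp_all
  · have hQij := hQ.2 i j hij
    unfold updPair
    split_ifs <;> simp_all

lemma exists_updPair_le (hP : IsCompMatrix P) (hε : ε ≤ 1) (hQ : Q ∈ perturbs P ε)
    {a b : Fin N} (hab : (a, b) ∈ winPairs P) {n : ℕ} {σ : BT (Fin N) n}
    (hσ : σ.leaves.Nodup) (i : Fin N) :
    ∃ e ∈ ({1 - ε, 1} : Set ℝ), updPair Q a b e ∈ perturbs P ε ∧
      wd (updPair Q a b e) σ i ≤ wd Q σ i := by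
  obtain ⟨hne, hwin⟩ := mem_winPairs.mp hab
  have hlose : P b a = 0 := by linarith [(hP a b hne).2.2]
  have hQab := hQ.1 a b hne
  have hclose := abs_le.mp (hQ.2 a b hne)
  have hε₀ : 0 ≤ ε := (abs_nonneg _).trans (hQ.2 a b hne)
  have hmem : ∀ e ∈ ({1 - ε, 1} : Set ℝ), updPair Q a b e ∈ perturbs P ε := by
    rintro e (rfl | rfl) <;>
      refine updPair_mem_perturbs hQ hne ?_ ?_ ?_ ?_ <;> simp [hwin, hlose, abs_le, hε₀, hε]
  have hend := affineFunctions.min_le_of_mem_Icc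
    (wd_updPair_mem_affineFunctions (Q := Q) (a := a) (b := b) hσ i)
    (show 1 - ε ≤ Q a b by linarith) hQab.2.1
  rw [updPair_self hQab.2.2] at hend
  rcases hend with h | h
  · exact ⟨1 - ε, .inl rfl, hmem _ (.inl rfl), h⟩
  · exact ⟨1, .inr rfl, hmem _ (.inr rfl), h⟩

lemma exists_wd_le_extreme (hP : IsCompMatrix P) (hε : ε ≤ 1) {n : ℕ} {σ : BT (Fin N) n}
    (hσ : σ.leaves.Nodup) (i : Fin N) {F : Finset (Fin N × Fin N)} (hF : F ⊆ winPairs P)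
    {P' : Fin N → Fin N → ℝ} (hP' : P' ∈ perturbs P ε) :
    ∃ Q ∈ perturbs P ε, wd Q σ i ≤ wd P' σ i ∧ ∀ r ∈ F, Q r.1 r.2 ∈ ({1 - ε, 1} : Set ℝ) := by
  classical
  induction F using Finset.induction_on with
  | empty => exact ⟨P', hP', le_rfl, by simp⟩
  | @insert q F hq ih =>
    obtain ⟨Q, hQ, hQle, hQF⟩ := ih ((subset_insert q F).trans hF)
    have hqwin := hF (mem_insert_self q F)
    obtain ⟨e, he, hmem, hle⟩ := exists_updPair_le hP hε hQ hqwin hσ i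
    refine ⟨updPair Q q.1 q.2 e, hmem, hle.trans hQle, fun r hr => ?_⟩
    rcases mem_insert.mp hr with rfl | hrF
    · simpa [updPair] using he
    · have hrq : r ≠ q := fun h => hq (h ▸ hrF)
      have hrq' : r ≠ q.swap := fun h =>
        swap_notMem_winPairs hP hqwin (h ▸ hF (mem_insert_of_mem hrF))
      rw [updPair_of_ne Q q.1 q.2 (fun h => hrq (Prod.ext h.1 h.2))
        (fun h => hrq' (Prod.ext h.1 h.2))]
      exact hQF r hrF

lemma detPerturb_filter_apply (hP : IsCompMatrix P) (hdet : IsDet P) (hQ : IsCompMatrix Q)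
    (hext : ∀ r ∈ winPairs P, Q r.1 r.2 ∈ ({1 - ε, 1} : Set ℝ)) {x y : Fin N} (hxy : x ≠ y) :
    detPerturb P ((winPairs P).filter fun r => Q r.1 r.2 = 1 - ε) ε x y = Q x y := by
  have hPsum := (hP x y hxy).2.2
  have hQsum := (hQ x y hxy).2.2
  rcases hdet x y hxy with hlose | hwin
  · have hyx : (y, x) ∈ winPairs P := mem_winPairs.mpr ⟨hxy.symm, by linarith⟩
    have hxy' : (x, y) ∉ winPairs P := swap_notMem_winPairs hP hyx
    obtain h' | h' : Q y x = 1 - ε ∨ Q y x = 1 := hext _ hyx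
    · simp only [detPerturb, mem_filter, hxy', hyx, h', false_and, and_self, if_true, if_false]
      linarith
    · simp only [detPerturb, mem_filter, hxy', hyx, h', false_and, true_and, if_false]
      split_ifs <;> linarith
  · have hxy' : (x, y) ∈ winPairs P := mem_winPairs.mpr ⟨hxy, hwin⟩
    have hyx : (y, x) ∉ winPairs P := swap_notMem_winPairs hP hxy'
    obtain h' | h' : Q x y = 1 - ε ∨ Q x y = 1 := hext _ hxy'
    · simp [detPerturb, hxy', h']
    · simp only [detPerturb, mem_filter, hxy', hyx, h', false_and, true_and, if_false]
      split_ifs <;> linarith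

lemma detPerturb_mem_perturbs (hP : IsCompMatrix P) {S : Finset (Fin N × Fin N)}
    (hS : S ⊆ winPairs P) (hε₀ : 0 ≤ ε) (hε₁ : ε ≤ 1) : detPerturb P S ε ∈ perturbs P ε := by
  have hwin : ∀ {x y : Fin N}, (x, y) ∈ S → P x y = 1 := fun h => (mem_winPairs.mp (hS h)).2
  refine ⟨fun i j hij => ?_, fun i j hij => ?_⟩ <;>
  · have hPij := hP i j hij
    have hswap : ∀ {x y : Fin N}, (x, y) ∈ S → (y, x) ∉ S := fun h h' =>
      swap_notMem_winPairs hP (hS h) (hS h')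
    unfold detPerturb
    split_ifs <;> simp_all [abs_le]

end Perturbation

section WorstPerturbation

variable {N n : ℕ} {P : Fin N → Fin N → ℝ} {σ : BT (Fin N) n} {ε : ℝ}

lemma exists_detPerturb_le (hP : IsCompMatrix P) (hdet : IsDet P) (hσ : σ.leaves.Nodup)
    (hε : ε ≤ 1) (i : Fin N) {P' : Fin N → Fin N → ℝ} (hP' : P' ∈ perturbs P ε) :
    ∃ S ⊆ winPairs P, wd (detPerturb P S ε) σ i ≤ wd P' σ i := by
  obtain ⟨Q, hQ, hle, hext⟩ := exists_wd_le_extreme hP hε hσ i subset_rfl hP'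
  refine ⟨_, filter_subset (fun r => Q r.1 r.2 = 1 - ε) _, le_of_eq_of_le ?_ hle⟩
  exact wd_congr_s15 hσ (fun x _ y _ hxy => detPerturb_filter_apply hP hdet hQ.1 hext hxy) i

theorem exists_wpe_eq_wd_detPerturb (hP : IsCompMatrix P) (hdet : IsDet P)
    (hσ : σ.leaves.Nodup) (hε₀ : 0 ≤ ε) (hε₁ : ε ≤ 1) (i : Fin N) :
    ∃ S ⊆ winPairs P, wpe i P ε σ = wd (detPerturb P S ε) σ i := by
  obtain ⟨S₀, hS₀, hmin⟩ := (winPairs P).powerset.exists_min_image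
    (fun S => wd (detPerturb P S ε) σ i) ⟨∅, empty_mem_powerset _⟩
  rw [mem_powerset] at hS₀
  refine ⟨S₀, hS₀, IsLeast.csInf_eq ⟨⟨_, detPerturb_mem_perturbs hP hS₀ hε₀ hε₁, rfl⟩, ?_⟩⟩
  rintro _ ⟨P', hP', rfl⟩
  obtain ⟨S, hS, hle⟩ := exists_detPerturb_le hP hdet hσ hε₁ i hP'
  exact (hmin S (mem_powerset.mpr hS)).trans hle

end WorstPerturbation

theorem det_worst_perturbation_form_general (n : ℕ)
    (P : Fin (2 ^ n) → Fin (2 ^ n) → ℝ) (hP : IsCompMatrix P) (hdet : IsDet P)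
    (σ : BT (Fin (2 ^ n)) n) (hσ : IsDraw σ)
    (istar : Fin (2 ^ n))
    (ε : ℝ) (hε : ε ∈ Set.Ioo (0 : ℝ) 1) :
    ∃ S : Finset (Fin (2 ^ n) × Fin (2 ^ n)),
      (∀ q ∈ S, q.1 ≠ q.2 ∧ P q.1 q.2 = 1) ∧
      wpe istar P ε σ = wd (detPerturb P S ε) σ istar := by
  have hnodup : σ.leaves.Nodup := List.nodup_iff_count_le_one.mpr fun i => (hσ i).le
  obtain ⟨S, hS, heq⟩ :=
    exists_wpe_eq_wd_detPerturb hP hdet hnodup hε.1.le hε.2.le istar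
  exact ⟨S, fun q hq => mem_winPairs.mp (hS hq), heq⟩

/-- for a deterministic tournament won by `i*`, the worst
ε-perturbation can be chosen to change some set `S` of matches from `(0,1)` to
`(ε, 1-ε)` and leave everything else intact. -/
theorem det_worst_perturbation_form (n : ℕ)
    (P : Fin (2 ^ n) → Fin (2 ^ n) → ℝ) (hP : IsCompMatrix P) (hdet : IsDet P)
    (σ : BT (Fin (2 ^ n)) n) (hσ : IsDraw σ)
    (istar : Fin (2 ^ n)) (hwin : wd P σ istar = 1)
    (ε : ℝ) (hε : ε ∈ Set.Ioo (0 : ℝ) 1) :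
    ∃ S : Finset (Fin (2 ^ n) × Fin (2 ^ n)),
      (∀ q ∈ S, q.1 ≠ q.2 ∧ P q.1 q.2 = 1) ∧
      wpe istar P ε σ = wd (detPerturb P S ε) σ istar :=
  det_worst_perturbation_form_general n P hP hdet σ hσ istar ε hε
end
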